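/- arXiv:1907.13519 — 4 statements merged into one kernel-verified Lean document; each statement's English description precedes it below -/
import Mathlib

section
/- On S^n, for any vector field B, the sum of squared Lie derivatives along the gradient-type fields A_i(x)=e_i-⟨x,e_i⟩x satisfies Σ_{i=1}^{n+1} L_{A_i}² B = ΔB + (n+1)B, where ΔB = Σ_i ∇_{A_i}∇_{A_i}B is the connection (rough) Laplacian. -/
noncomputable section

/-- The tangential projection at `x` on the sphere: `P_x(y) = y - ⟨x,y⟩x`. -/
def sphProj {n : ℕ} (x y : EuclideanSpace ℝ (Fin (n+1))) : EuclideanSpace ℝ (Fin (n+1)) :=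
  y - (inner ℝ x y : ℝ) • x

/-- The tangential field `A_e(y) = e - ⟨y,e⟩y` associated to a fixed `e ∈ ℝ^{n+1}`. -/
def sphA {n : ℕ} (e y : EuclideanSpace ℝ (Fin (n+1))) : EuclideanSpace ℝ (Fin (n+1)) :=
  e - (inner ℝ y e : ℝ) • y

/-- Covariant derivative on the sphere: tangential projection of the ambient
directional derivative. -/
def sphCov {n : ℕ} (B : EuclideanSpace ℝ (Fin (n+1)) → EuclideanSpace ℝ (Fin (n+1)))
    (x v : EuclideanSpace ℝ (Fin (n+1))) : EuclideanSpace ℝ (Fin (n+1)) :=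
  sphProj x (fderiv ℝ B x v)

/-- Lie derivative (Lie bracket) of tangent vector fields on the sphere:
`L_A B = ∇_A B - ∇_B A` (torsion-freeness). -/
def sphLie {n : ℕ} (A B : EuclideanSpace ℝ (Fin (n+1)) → EuclideanSpace ℝ (Fin (n+1)))
    (x : EuclideanSpace ℝ (Fin (n+1))) : EuclideanSpace ℝ (Fin (n+1)) :=
  sphCov B x (A x) - sphCov A x (B x)

/-!
On the unit sphere the tangential derivative of `A_c` is `∇_v A_c = -⟨x, c⟩ v`, so
`L_{A_c} B = ∇_{A_c} B + ⟨x, c⟩ B`, and differentiating this once more gives, at a point `x` of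
the sphere, `L_{A_c}² B = ∇_{A_c} ∇_{A_c} B + ‖c‖² B + 2 ⟨x, c⟩ ∇_{A_c} B`. Summing over an
orthonormal basis `c = e_i`, the middle terms add up to `(n + 1) B`, and the cross terms vanish
because `∇B` is linear in the direction and `∑ ⟨x, e_i⟩ A_{e_i}(x) = x - ‖x‖² x = 0`.
-/

open scoped RealInnerProductSpace

section Sphere

variable {n : ℕ}

local notation "E" => EuclideanSpace ℝ (Fin (n+1))

def sphProjₗ (x : E) : E →ₗ[ℝ] E where
  toFun := sphProj x
  map_add' u v := by simp only [sphProj, inner_add_right, add_smul]; abel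
  map_smul' r v := by simp only [sphProj, real_inner_smul_right, smul_sub, mul_smul]; rfl

theorem sphProjₗ_apply (x v : E) : sphProjₗ x v = sphProj x v := rfl

theorem sphProj_self {x : E} (hx : ‖x‖ = 1) : sphProj x x = 0 := by
  rw [sphProj, real_inner_self_eq_norm_sq, hx, one_pow, one_smul, sub_self]

theorem sphProj_of_inner_eq_zero {x v : E} (h : ⟪x, v⟫ = 0) : sphProj x v = v := by
  rw [sphProj, h, zero_smul, sub_zero]

theorem inner_sphProj {x : E} (hx : ‖x‖ = 1) (v : E) : ⟪x, sphProj x v⟫ = 0 := by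
  rw [sphProj, inner_sub_right, real_inner_smul_right, real_inner_self_eq_norm_sq, hx]
  ring

theorem sphProj_sphProj {x : E} (hx : ‖x‖ = 1) (v : E) :
    sphProj x (sphProj x v) = sphProj x v :=
  sphProj_of_inner_eq_zero (inner_sphProj hx v)

theorem sum_smul_sphCov {ι : Type*} (s : Finset ι) (B : E → E) (x : E) (a : ι → ℝ) (v : ι → E) :
    ∑ i ∈ s, a i • sphCov B x (v i) = sphCov B x (∑ i ∈ s, a i • v i) := by
  simp only [sphCov, ← sphProjₗ_apply, map_sum, map_smul]

theorem hasFDerivAt_sphA (c x : E) :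
    HasFDerivAt (sphA c)
      (-(⟪x, c⟫ • ContinuousLinearMap.id ℝ E + (innerSL ℝ c).smulRight x)) x := by
  have h := (hasFDerivAt_const c x).fun_sub
    (((hasFDerivAt_id x).inner ℝ (hasFDerivAt_const c x)).fun_smul (hasFDerivAt_id x))
  refine (h.congr_fderiv ?_ : HasFDerivAt (sphA c) _ x)
  ext v
  simp [real_inner_comm]

theorem fderiv_sphA_apply (c x v : E) :
    fderiv ℝ (sphA c) x v = -(⟪x, c⟫ • v + ⟪v, c⟫ • x) := by
  simp [(hasFDerivAt_sphA c x).fderiv, real_inner_comm]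

theorem sphCov_sphA {x : E} (hx : ‖x‖ = 1) (c v : E) :
    sphCov (sphA c) x v = -⟪x, c⟫ • sphProj x v := by
  rw [sphCov, fderiv_sphA_apply, ← sphProjₗ_apply]
  simp only [map_neg, map_add, map_smul, sphProjₗ_apply, sphProj_self hx, smul_zero, add_zero,
    neg_smul]

-- An identity of fields on all of `ℝ^{n+1}`, so that it can be differentiated again.
theorem sphLie_sphA (B : E → E) (c y : E) :
    sphLie (sphA c) B y
      = sphProj y (fderiv ℝ B y (sphA c y) + ⟪y, c⟫ • B y + ⟪B y, c⟫ • y) := by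
  simp only [sphLie, sphCov, fderiv_sphA_apply, ← sphProjₗ_apply, map_add, map_neg]
  abel

theorem sphCov_sphProj_comp {g : E → E} {g' : E →L[ℝ] E} {x : E} (hg : HasFDerivAt g g' x)
    (hx : ‖x‖ = 1) (v : E) :
    sphCov (fun y => sphProj y (g y)) x v = sphProj x (g' v) - ⟪x, g x⟫ • sphProj x v := by
  have h : HasFDerivAt (fun y => sphProj y (g y)) _ x :=
    hg.fun_sub (((hasFDerivAt_id x).inner ℝ hg).fun_smul (hasFDerivAt_id x))
  rw [sphCov, h.fderiv]
  simp only [sub_apply, add_apply, smul_apply, ContinuousLinearMap.smulRight_apply,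
    ContinuousLinearMap.comp_apply, ContinuousLinearMap.prod_apply, fderivInnerCLM_apply,
    ContinuousLinearMap.coe_id', id_eq, ← sphProjₗ_apply, map_sub, map_add, map_smul]
  simp only [sphProjₗ_apply, sphProj_self hx, smul_zero, add_zero]

theorem sphLie_sphA_sphLie_sphA {B : E → E} (hB : ContDiff ℝ 2 B) {x : E} (hx : ‖x‖ = 1)
    (hBx : ⟪B x, x⟫ = 0) (c : E) :
    sphLie (sphA c) (sphLie (sphA c) B) x
      = sphCov (fun y => sphCov B y (sphA c y)) x (sphA c x) + ‖c‖ ^ 2 • B x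
        + (2 * ⟪x, c⟫) • sphCov B x (sphA c x) := by
  have hB' (y : E) : HasFDerivAt B (fderiv ℝ B y) y :=
    (hB.differentiable (by norm_num) y).hasFDerivAt
  have hw : HasFDerivAt (fun y => fderiv ℝ B y (sphA c y)) _ x :=
    ((hB.fderiv_right le_rfl).differentiable one_ne_zero x).hasFDerivAt.clm_apply
      (hasFDerivAt_sphA c x)
  have hg : HasFDerivAt (fun y => fderiv ℝ B y (sphA c y) + ⟪y, c⟫ • B y + ⟪B y, c⟫ • y) _ x :=
    (hw.add (((hasFDerivAt_id x).inner ℝ (hasFDerivAt_const c x)).smul (hB' x))).add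
      (((hB' x).inner ℝ (hasFDerivAt_const c x)).smul (hasFDerivAt_id x))
  have hxx : ⟪x, x⟫ = 1 := by rw [real_inner_self_eq_norm_sq, hx, one_pow]
  have hxB : ⟪x, B x⟫ = 0 := by rw [real_inner_comm, hBx]
  have hAc : ⟪sphA c x, c⟫ = ‖c‖ ^ 2 - ⟪x, c⟫ ^ 2 := by
    rw [sphA, inner_sub_left, real_inner_smul_left, real_inner_self_eq_norm_sq]; ring
  rw [sphLie, sphCov_sphA hx, funext (sphLie_sphA B c), sphCov_sphProj_comp hg hx,
    show (fun y => sphCov B y (sphA c y)) = fun y => sphProj y (fderiv ℝ B y (sphA c y)) from rfl,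
    sphCov_sphProj_comp hw hx]
  simp only [add_apply, smul_apply, ContinuousLinearMap.smulRight_apply,
    ContinuousLinearMap.comp_apply, ContinuousLinearMap.prod_apply, fderivInnerCLM_apply,
    ContinuousLinearMap.coe_id', id_eq, ← sphProjₗ_apply, map_add, map_smul]
  simp only [sphProjₗ_apply, sphProj_sphProj hx]
  simp only [zero_apply, inner_zero_right, zero_add, sphCov, sphProj_self hx,
    sphProj_of_inner_eq_zero hxB, inner_add_right, real_inner_smul_right, hxx, hxB, hAc]
  module

theorem sum_inner_smul_sphA {ι : Type*} [Fintype ι] (b : OrthonormalBasis ι ℝ E) {x : E}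
    (hx : ‖x‖ = 1) : ∑ i, ⟪x, b i⟫ • sphA (b i) x = 0 := by
  have hrepr : ∑ i, ⟪x, b i⟫ • b i = x := by simpa only [real_inner_comm] using b.sum_repr' x
  simp only [sphA, smul_sub, smul_smul, Finset.sum_sub_distrib, ← Finset.sum_smul, ← sq,
    hrepr, b.sum_sq_inner_left, hx, one_pow, one_smul, sub_self]

end Sphere

/-- On `Sⁿ`, for any tangent vector field `B`,
`Σ_{i=1}^{n+1} L_{A_i}² B = ΔB + (n+1)B`, where `ΔB = Σ_i ∇_{A_i}∇_{A_i}B`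
is the connection (rough) Laplacian. -/
theorem sphere_sum_lie_sq {n : ℕ} (e : Fin (n+1) → EuclideanSpace ℝ (Fin (n+1)))
    (he : Orthonormal ℝ e)
    (B : EuclideanSpace ℝ (Fin (n+1)) → EuclideanSpace ℝ (Fin (n+1)))
    (hB : ContDiff ℝ 2 B)
    (hBtan : ∀ y : EuclideanSpace ℝ (Fin (n+1)), ‖y‖ = 1 → (inner ℝ (B y) y : ℝ) = 0)
    (x : EuclideanSpace ℝ (Fin (n+1))) (hx : ‖x‖ = 1) :
    ∑ i, sphLie (sphA (e i)) (sphLie (sphA (e i)) B) x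
      = (∑ i, sphCov (fun y => sphCov B y (sphA (e i) y)) x (sphA (e i) x))
        + ((n : ℝ) + 1) • B x := by
  obtain ⟨b, rfl⟩ : ∃ b : OrthonormalBasis (Fin (n+1)) ℝ (EuclideanSpace ℝ (Fin (n+1))), ⇑b = e :=
    ⟨.mk he (he.linearIndependent.span_eq_top_of_card_eq_finrank' (by simp)).ge,
      OrthonormalBasis.coe_mk _ _⟩
  have hcross : ∑ i, (2 * ⟪x, b i⟫) • sphCov B x (sphA (b i) x) = 0 := by
    simp only [mul_smul, ← Finset.smul_sum, sum_smul_sphCov, sum_inner_smul_sphA b hx]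
    rw [sphCov, map_zero, ← sphProjₗ_apply, map_zero, smul_zero]
  simp only [sphLie_sphA_sphLie_sphA hB hx (hBtan x hx), b.norm_eq_one, one_pow, one_smul,
    Finset.sum_add_distrib, hcross, add_zero, Finset.sum_const, Finset.card_univ, Fintype.card_fin]
  rw [← Nat.cast_smul_eq_nsmul ℝ, Nat.cast_succ]
end
end

section
/- Let M be a compact Riemannian manifold and {A_1,...,A_N} vector fields satisfying: (1) |v|² = Σ_i ⟨A_i(x),v⟩² for all tangent vectors v, (2) Σ_i ∇_{A_i}A_i = 0, (3) Σ_i A_i ∧ ∇_V A_i = 0 for all vector fields V. Then Σ_{i=1}^N div(A_i) A_i = 0. -/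
noncomputable section

/-- Data of an isometric (Nash) embedding `J : M → ℝᴺ` of a Riemannian manifold,
presented in a global chart `F` (the manifold `M`): the tangent space at `x` is
`E_x = dJ(x)(T_x M) = range (fderiv ℝ J x) ⊆ ℝᴺ`, carrying the induced inner
product, and `P x : ℝᴺ → ℝᴺ` is the orthogonal projection `Λ_x` onto `E_x`
(symmetric idempotent with range `E_x`, fixing `E_x`). -/
structure IsoEmbedding (F E : Type*) [NormedAddCommGroup F] [InnerProductSpace ℝ F]
    [NormedAddCommGroup E] [InnerProductSpace ℝ E] where
  J : F → E
  P : F → E →L[ℝ] E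
  smoothJ : ContDiff ℝ (⊤ : ℕ∞) J
  smoothP : ContDiff ℝ (⊤ : ℕ∞) P
  immersion : ∀ x, Function.Injective (fderiv ℝ J x)
  idem : ∀ x, (P x).comp (P x) = P x
  symm : ∀ x ξ η, (inner ℝ (P x ξ) η : ℝ) = (inner ℝ ξ (P x η) : ℝ)
  proj_mem : ∀ x ξ, P x ξ ∈ Set.range (fderiv ℝ J x)
  proj_fix : ∀ x (u : F), P x (fderiv ℝ J x u) = fderiv ℝ J x u

namespace IsoEmbedding

variable {F E : Type*} [NormedAddCommGroup F] [InnerProductSpace ℝ F]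
  [NormedAddCommGroup E] [InnerProductSpace ℝ E]

/-- The second fundamental form `α_x(u,v) = dΛ_x(u) · dJ(x)v`, for directions
`u, v ∈ T_x M` expressed in the chart. -/
def sff (d : IsoEmbedding F E) (x : F) (u v : F) : E :=
  (fderiv ℝ d.P x u) (fderiv ℝ d.J x v)

/-- The covariant derivative `(∇_u B)(x) = (dJ(x))^* (∂_u (dJ(·)B))(x)` of a
(tangent-valued) field `B : F → E`, realized in `ℝᴺ` as the orthogonal
projection of the ambient directional derivative onto `E_x`. -/
def cov (d : IsoEmbedding F E) (B : F → E) (x : F) (u : F) : E :=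
  d.P x (fderiv ℝ B x u)

/-- The shape operator `𝒜(u, V)(x) = -(dJ(x))^*(∂_u V)(x)` of a normal field
`V`, realized in `ℝᴺ` via the orthogonal projection. -/
def shape (d : IsoEmbedding F E) (V : F → E) (x : F) (u : F) : E :=
  -(d.P x (fderiv ℝ V x u))

end IsoEmbedding

open scoped RealInnerProductSpace

/-- Let `{A_1,…,A_m}` be vector fields on a Riemannian manifold `M`
(isometrically realized in `ℝᴺ`; `a i` are the chart components, with embedded
images `Ā_i(y) = dJ(y)(a i y)`) satisfying:
(1) `|v|² = Σ_i ⟨A_i(x),v⟩²` for all tangent vectors `v`;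
(2) `Σ_i ∇_{A_i}A_i = 0`;
(3) `Σ_i A_i ∧ ∇_V A_i = 0` for all tangent directions.
Then `Σ_i div(A_i) A_i = 0`, where
`div(A_i)(x) = Σ_j ⟨∇_{v_j}A_i, v_j⟩` over an orthonormal tangent frame `v`. -/
theorem sum_div_smul_eq_zero {n N m : ℕ}
    (d : IsoEmbedding (EuclideanSpace ℝ (Fin n)) (EuclideanSpace ℝ (Fin N)))
    (a : Fin m → EuclideanSpace ℝ (Fin n) → EuclideanSpace ℝ (Fin n))
    (ha_diff : ∀ i, Differentiable ℝ (a i))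
    (v : Fin n → EuclideanSpace ℝ (Fin n) → EuclideanSpace ℝ (Fin n))
    (hv : ∀ y, Orthonormal ℝ (fun j => fderiv ℝ d.J y (v j y)))
    (h1 : ∀ y (u : EuclideanSpace ℝ (Fin n)),
      ‖fderiv ℝ d.J y u‖ ^ 2
        = ∑ i, (inner ℝ (fderiv ℝ d.J y (a i y)) (fderiv ℝ d.J y u) : ℝ) ^ 2)
    (h2 : ∀ y, ∑ i, d.cov (fun z => fderiv ℝ d.J z (a i z)) y (a i y) = 0)
    (h3 : ∀ y (wdir p q : EuclideanSpace ℝ (Fin n)),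
      ∑ i, ((inner ℝ (fderiv ℝ d.J y (a i y)) (fderiv ℝ d.J y p) : ℝ) *
              (inner ℝ (d.cov (fun z => fderiv ℝ d.J z (a i z)) y wdir) (fderiv ℝ d.J y q) : ℝ)
          - (inner ℝ (fderiv ℝ d.J y (a i y)) (fderiv ℝ d.J y q) : ℝ) *
              (inner ℝ (d.cov (fun z => fderiv ℝ d.J z (a i z)) y wdir) (fderiv ℝ d.J y p) : ℝ))
        = 0) :
    ∀ y, ∑ i,
        (∑ j, (inner ℝ (d.cov (fun z => fderiv ℝ d.J z (a i z)) y (v j y))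
          (fderiv ℝ d.J y (v j y)) : ℝ)) • fderiv ℝ d.J y (a i y) = 0 := by
  intro y
  classical
  set D := fderiv ℝ d.J y with hD
  have hinj : Function.Injective D := d.immersion y
  set e : Fin n → EuclideanSpace ℝ (Fin N) := fun j => D (v j y) with he
  have hon : Orthonormal ℝ e := hv y
  -- the tangent space as a submodule
  set T : Submodule ℝ (EuclideanSpace ℝ (Fin N)) :=
    LinearMap.range (D : EuclideanSpace ℝ (Fin n) →ₗ[ℝ] EuclideanSpace ℝ (Fin N)) with hT
  have hmemT : ∀ u, D u ∈ T := fun u => ⟨u, rfl⟩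
  have hfinrank : Module.finrank ℝ T = n := by
    have h := LinearMap.finrank_range_of_inj
      (f := (D : EuclideanSpace ℝ (Fin n) →ₗ[ℝ] EuclideanSpace ℝ (Fin N)))
      (by simpa using hinj)
    simpa using h
  -- orthonormal basis of T
  let e' : Fin n → T := fun j => ⟨e j, hmemT _⟩
  have hon' : Orthonormal ℝ e' := by
    rw [orthonormal_iff_ite] at hon ⊢
    intro i j
    simpa [Submodule.coe_inner, e'] using hon i j
  by_cases hn : n = 0
  · subst hn
    -- T is trivial, every D u = 0
    have hDz : ∀ u : EuclideanSpace ℝ (Fin 0), D u = 0 := by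
      intro u
      have : u = 0 := Subsingleton.elim _ _
      simp [this]
    simp [hDz]
  have : Nonempty (Fin n) := ⟨⟨0, Nat.pos_of_ne_zero hn⟩⟩
  have hspan : Submodule.span ℝ (Set.range e') = ⊤ :=
    hon'.linearIndependent.span_eq_top_of_card_eq_finrank (by simp [hfinrank])
  let b : OrthonormalBasis (Fin n) ℝ T := OrthonormalBasis.mk hon' hspan.ge
  have hb : ∀ j, (b j : EuclideanSpace ℝ (Fin N)) = e j := by
    intro j; rw [OrthonormalBasis.coe_mk]
  -- expansion of tangent vectors
  have hexpT : ∀ w : T, ∑ j, ⟪e j, (w : EuclideanSpace ℝ (Fin N))⟫ • e j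
      = (w : EuclideanSpace ℝ (Fin N)) := by
    intro w
    have h := congrArg (Subtype.val) (b.sum_repr' w)
    push_cast at h
    simpa [hb, Submodule.coe_inner] using h
  -- expansion of a i y in the frame v
  have hexp : ∀ i, ∑ j, ⟪e j, D (a i y)⟫ • v j y = a i y := by
    intro i
    apply hinj
    rw [map_sum]
    simp only [map_smul]
    exact hexpT ⟨D (a i y), hmemT _⟩
  -- notation for covariant derivative fields
  set Cv : Fin m → EuclideanSpace ℝ (Fin n) → EuclideanSpace ℝ (Fin N) :=
    fun i u => d.cov (fun z => fderiv ℝ d.J z (a i z)) y u with hCv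
  have hCvlin : ∀ i, ∀ (c : Fin n → ℝ),
      Cv i (∑ j, c j • v j y) = ∑ j, c j • Cv i (v j y) := by
    intro i c
    simp only [hCv, IsoEmbedding.cov, map_sum, map_smul]
  -- divergence coefficients
  set k : Fin m → ℝ := fun i => ∑ j, ⟪Cv i (v j y), e j⟫ with hk
  -- the sum in question
  set S : EuclideanSpace ℝ (Fin N) := ∑ i, k i • D (a i y) with hS
  -- S pairs to zero against all tangent vectors
  have hker : ∀ p, ⟪S, D p⟫ = 0 := by
    intro p
    have hstep : ∀ j, ∑ i, ⟪D (a i y), D p⟫ * ⟪Cv i (v j y), e j⟫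
        = ∑ i, ⟪D (a i y), e j⟫ * ⟪Cv i (v j y), D p⟫ := by
      intro j
      have h := h3 y (v j y) p (v j y)
      rw [Finset.sum_sub_distrib, sub_eq_zero] at h
      exact h
    calc ⟪S, D p⟫ = ∑ i, k i * ⟪D (a i y), D p⟫ := by
            rw [hS, sum_inner]
            exact Finset.sum_congr rfl fun i _ => real_inner_smul_left _ _ _
      _ = ∑ j, ∑ i, ⟪D (a i y), D p⟫ * ⟪Cv i (v j y), e j⟫ := by
            rw [Finset.sum_comm]
            congr 1; ext i
            rw [hk, Finset.sum_mul]
            congr 1; ext j; ring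
      _ = ∑ j, ∑ i, ⟪D (a i y), e j⟫ * ⟪Cv i (v j y), D p⟫ := by
            congr 1; ext j; exact hstep j
      _ = ∑ i, ⟪Cv i (a i y), D p⟫ := by
            rw [Finset.sum_comm]
            refine Finset.sum_congr rfl fun i _ => ?_
            have hCexp : Cv i (a i y) = ∑ j, ⟪e j, D (a i y)⟫ • Cv i (v j y) := by
              conv_lhs => rw [← hexp i]
              exact hCvlin i _
            rw [hCexp, sum_inner]
            refine Finset.sum_congr rfl fun j _ => ?_
            rw [real_inner_smul_left, real_inner_comm (e j)]
      _ = ⟪∑ i, Cv i (a i y), D p⟫ := by rw [sum_inner]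
      _ = 0 := by rw [hCv]; simp only []; rw [h2 y]; simp
  -- S lies in the tangent space
  have hSmem : S = D (∑ i, k i • a i y) := by
    rw [hS, map_sum]; simp only [map_smul]
  have hSS : ⟪S, S⟫ = 0 := by
    have h := hker (∑ i, k i • a i y)
    rwa [← hSmem] at h
  have hS0 : S = 0 := by
    rwa [inner_self_eq_zero] at hSS
  simpa [hS, hk, hCv, he, hD] using hS0
end
end

section
/- Let J: M → ℝ^N be an isometric embedding of a compact Riemannian n-manifold, {e_1,...,e_N} an orthonormal basis of ℝ^N, and A_i(x) = (dJ(x))*e_i. Then Σ_{i=1}^N ∇_{A_i}A_i = 0. -/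
noncomputable section

open scoped RealInnerProductSpace

lemma sum_inner_eq_trace_aux {N : ℕ} [NeZero N] (e : Fin N → EuclideanSpace ℝ (Fin N))
    (he : Orthonormal ℝ e)
    (T : EuclideanSpace ℝ (Fin N) →ₗ[ℝ] EuclideanSpace ℝ (Fin N)) :
    ∑ i, ⟪e i, T (e i)⟫ = LinearMap.trace ℝ _ T := by
  have hcard : Fintype.card (Fin N) = Module.finrank ℝ (EuclideanSpace ℝ (Fin N)) := by simp
  let b := basisOfOrthonormalOfCardEqFinrank he hcard
  have hb : ⇑b = e := coe_basisOfOrthonormalOfCardEqFinrank he hcard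
  rw [LinearMap.trace_eq_matrix_trace ℝ b T, Matrix.trace]
  refine Finset.sum_congr rfl fun i _ => ?_
  rw [Matrix.diag, LinearMap.toMatrix_apply, hb]
  conv_lhs => rw [← b.sum_repr (T (e i))]
  simp_rw [hb]
  exact he.inner_right_fintype _ i

lemma trace_qp_zero {N : ℕ} (p q : EuclideanSpace ℝ (Fin N) →ₗ[ℝ] EuclideanSpace ℝ (Fin N))
    (hp : p * p = p) (hpqp : p * q * p = 0) :
    LinearMap.trace ℝ _ (q * p) = 0 := by
  have : q * p = q * (p * p) := by rw [hp]
  rw [this, ← mul_assoc, LinearMap.trace_mul_comm, ← mul_assoc, hpqp, map_zero]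


/-- For `A_i(x) = (dJ(x))^* e_i` (realized as `Λ_x e_i`), with `{e_i}` an
orthonormal basis of `ℝᴺ`, one has `Σ_{i=1}^N ∇_{A_i}A_i = 0`.  The direction
`A_i(x)` is a tangent vector; `u i` is its chart representative,
`dJ(x)(u i) = Λ_x e_i`. -/
theorem sum_cov_adapted_fields {n N : ℕ}
    (d : IsoEmbedding (EuclideanSpace ℝ (Fin n)) (EuclideanSpace ℝ (Fin N)))
    (e : Fin N → EuclideanSpace ℝ (Fin N)) (he : Orthonormal ℝ e)
    (x : EuclideanSpace ℝ (Fin n)) (u : Fin N → EuclideanSpace ℝ (Fin n))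
    (hu : ∀ i, fderiv ℝ d.J x (u i) = d.P x (e i)) :
    ∑ i, d.cov (fun y => d.P y (e i)) x (u i) = 0 := by
  classical
  obtain rfl | hN := Nat.eq_zero_or_pos N
  · simp
  haveI : NeZero N := ⟨hN.ne'⟩
  have hPdiff : Differentiable ℝ d.P := d.smoothP.differentiable (by simp)
  have hJdiff : Differentiable ℝ d.J := d.smoothJ.differentiable (by simp)
  have hJ'diff : Differentiable ℝ (fderiv ℝ d.J) :=
    (d.smoothJ.fderiv_right (m := 1) (by exact WithTop.coe_le_coe.mpr le_top)).differentiable one_ne_zero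
  have hQ : HasFDerivAt d.P (fderiv ℝ d.P x) x := (hPdiff x).hasFDerivAt
  have hS : HasFDerivAt (fderiv ℝ d.J) (fderiv ℝ (fderiv ℝ d.J) x) x := (hJ'diff x).hasFDerivAt
  have hSsymm : ∀ v w, fderiv ℝ (fderiv ℝ d.J) x v w = fderiv ℝ (fderiv ℝ d.J) x w v :=
    second_derivative_symmetric (fun y => (hJdiff y).hasFDerivAt) hS
  have hPP : ∀ ξ, d.P x (d.P x ξ) = d.P x ξ := fun ξ => by
    simpa using DFunLike.congr_fun (d.idem x) ξ
  -- derivative of `y ↦ P y ξ`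
  have hev : ∀ ξ, HasFDerivAt (fun y => d.P y ξ)
      ((d.P x).comp 0 + (fderiv ℝ d.P x).flip ξ) x :=
    fun ξ => hQ.clm_apply (hasFDerivAt_const ξ x)
  have hev' : ∀ ξ v, fderiv ℝ (fun y => d.P y ξ) x v = fderiv ℝ d.P x v ξ := by
    intro ξ v; rw [(hev ξ).fderiv]; simp
  -- differentiate the idempotency relation
  have key1 : ∀ v ξ, d.P x (fderiv ℝ d.P x v ξ) + fderiv ℝ d.P x v (d.P x ξ)
      = fderiv ℝ d.P x v ξ := by
    intro v ξ
    have h := (hQ.clm_comp hQ).fderiv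
    rw [show (fun y => (d.P y).comp (d.P y)) = d.P from funext d.idem] at h
    have h2 := DFunLike.congr_fun (DFunLike.congr_fun h v) ξ
    simpa using h2.symm
  -- differentiate `P y (dJ y w) = dJ y w`
  have key2 : ∀ v w, d.P x (fderiv ℝ (fderiv ℝ d.J) x v w)
      + fderiv ℝ d.P x v (fderiv ℝ d.J x w) = fderiv ℝ (fderiv ℝ d.J) x v w := by
    intro v w
    have hder : HasFDerivAt (fun y => fderiv ℝ d.J y w)
        ((fderiv ℝ d.J x).comp 0 + (fderiv ℝ (fderiv ℝ d.J) x).flip w) x :=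
      hS.clm_apply (hasFDerivAt_const w x)
    have hL : HasFDerivAt (fun y => d.P y (fderiv ℝ d.J y w))
        ((d.P x).comp ((fderiv ℝ d.J x).comp 0 + (fderiv ℝ (fderiv ℝ d.J) x).flip w)
          + (fderiv ℝ d.P x).flip (fderiv ℝ d.J x w)) x := hQ.clm_apply hder
    rw [show (fun y => d.P y (fderiv ℝ d.J y w)) = (fun y => fderiv ℝ d.J y w) from
      funext fun y => d.proj_fix y w] at hL
    have h2 := DFunLike.congr_fun (hL.unique hder) v
    simpa using h2
  -- symmetry of the second fundamental form
  have sffsym : ∀ v w, fderiv ℝ d.P x v (fderiv ℝ d.J x w)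
      = fderiv ℝ d.P x w (fderiv ℝ d.J x v) := by
    intro v w
    have h1 := key2 v w
    have h2 := key2 w v
    rw [hSsymm w v] at h2
    exact add_left_cancel (h1.trans h2.symm)
  -- symmetry of the derivative of the projection
  have symQ : ∀ (v : EuclideanSpace ℝ (Fin n)) (ξ η : EuclideanSpace ℝ (Fin N)),
      ⟪fderiv ℝ d.P x v ξ, η⟫ = ⟪ξ, fderiv ℝ d.P x v η⟫ := by
    intro v ξ η
    have hf1 : HasFDerivAt (fun y => (innerSL ℝ η) (d.P y ξ))
        ((innerSL ℝ η).comp ((d.P x).comp 0 + (fderiv ℝ d.P x).flip ξ)) x :=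
      (innerSL ℝ η).hasFDerivAt.comp x (hev ξ)
    have hf2 : HasFDerivAt (fun y => (innerSL ℝ ξ) (d.P y η))
        ((innerSL ℝ ξ).comp ((d.P x).comp 0 + (fderiv ℝ d.P x).flip η)) x :=
      (innerSL ℝ ξ).hasFDerivAt.comp x (hev η)
    have hfeq : (fun y => (innerSL ℝ η) (d.P y ξ)) = (fun y => (innerSL ℝ ξ) (d.P y η)) := by
      funext y
      simp only [innerSL_apply_apply]
      rw [← real_inner_comm η (d.P y ξ), d.symm y ξ η]
    rw [hfeq] at hf1
    have h2 := DFunLike.congr_fun (hf1.unique hf2) v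
    simp only [ContinuousLinearMap.coe_comp', Function.comp_apply,
      ContinuousLinearMap.add_apply, ContinuousLinearMap.flip_apply,
      ContinuousLinearMap.zero_apply, map_zero, zero_add, innerSL_apply_apply,
      ContinuousLinearMap.comp_apply] at h2
    rw [real_inner_comm η (fderiv ℝ d.P x v ξ)]
    exact h2
  -- P ∘ Q v ∘ P = 0
  have hPQP : ∀ v ξ, d.P x (fderiv ℝ d.P x v (d.P x ξ)) = 0 := by
    intro v ξ
    have h := key1 v (d.P x ξ)
    rw [hPP ξ] at h
    exact add_eq_right.mp h
  -- rewrite each covariant-derivative term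
  have hcov : ∀ i, d.cov (fun y => d.P y (e i)) x (u i)
      = fderiv ℝ d.P x (u i) (e i - d.P x (e i)) := by
    intro i
    have h1 : d.cov (fun y => d.P y (e i)) x (u i)
        = d.P x (fderiv ℝ d.P x (u i) (e i)) := by
      simp only [IsoEmbedding.cov, hev']
    rw [h1, map_sub]
    exact eq_sub_of_add_eq (key1 (u i) (e i))
  rw [Finset.sum_congr rfl fun i _ => hcov i]
  set Z := ∑ i, fderiv ℝ d.P x (u i) (e i - d.P x (e i)) with hZ
  have hPn : ∀ i, d.P x (e i - d.P x (e i)) = 0 := fun i => by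
    rw [map_sub, hPP]; simp
  have tangent : ∀ i, d.P x (fderiv ℝ d.P x (u i) (e i - d.P x (e i)))
      = fderiv ℝ d.P x (u i) (e i - d.P x (e i)) := by
    intro i
    have h := key1 (u i) (e i - d.P x (e i))
    rwa [hPn i, map_zero, add_zero] at h
  have hzero : ∀ w : EuclideanSpace ℝ (Fin N), ⟪Z, w⟫ = 0 := by
    intro w
    obtain ⟨v, hv⟩ := d.proj_mem x w
    rw [hZ, sum_inner]
    have hterm : ∀ i, ⟪fderiv ℝ d.P x (u i) (e i - d.P x (e i)), w⟫
        = ⟪e i, fderiv ℝ d.P x v (d.P x (e i))⟫ := by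
      intro i
      calc ⟪fderiv ℝ d.P x (u i) (e i - d.P x (e i)), w⟫
          = ⟪d.P x (fderiv ℝ d.P x (u i) (e i - d.P x (e i))), w⟫ := by rw [tangent i]
        _ = ⟪fderiv ℝ d.P x (u i) (e i - d.P x (e i)), d.P x w⟫ := d.symm x _ w
        _ = ⟪fderiv ℝ d.P x (u i) (e i - d.P x (e i)), fderiv ℝ d.J x v⟫ := by rw [hv]
        _ = ⟪e i - d.P x (e i), fderiv ℝ d.P x (u i) (fderiv ℝ d.J x v)⟫ := symQ _ _ _
        _ = ⟪e i - d.P x (e i), fderiv ℝ d.P x v (fderiv ℝ d.J x (u i))⟫ := by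
              rw [sffsym (u i) v]
        _ = ⟪e i - d.P x (e i), fderiv ℝ d.P x v (d.P x (e i))⟫ := by rw [hu i]
        _ = ⟪e i, fderiv ℝ d.P x v (d.P x (e i))⟫ := by
              rw [inner_sub_left]
              have hperp : ⟪d.P x (e i), fderiv ℝ d.P x v (d.P x (e i))⟫ = 0 := by
                rw [d.symm x (e i) _, hPQP v (e i), inner_zero_right]
              rw [hperp, sub_zero]
    rw [Finset.sum_congr rfl fun i _ => hterm i]
    -- trace argument
    set p : EuclideanSpace ℝ (Fin N) →ₗ[ℝ] EuclideanSpace ℝ (Fin N) :=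
      (d.P x : EuclideanSpace ℝ (Fin N) →ₗ[ℝ] EuclideanSpace ℝ (Fin N)) with hp'
    set q : EuclideanSpace ℝ (Fin N) →ₗ[ℝ] EuclideanSpace ℝ (Fin N) :=
      (fderiv ℝ d.P x v : EuclideanSpace ℝ (Fin N) →ₗ[ℝ] EuclideanSpace ℝ (Fin N)) with hq'
    have hp : p * p = p := LinearMap.ext fun ξ => by
      simpa [hp', Module.End.mul_apply] using hPP ξ
    have hpqp : p * q * p = 0 := LinearMap.ext fun ξ => by
      simpa [hp', hq', Module.End.mul_apply] using hPQP v ξ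
    have hqp : ∀ i, ⟪e i, fderiv ℝ d.P x v (d.P x (e i))⟫ = ⟪e i, (q * p) (e i)⟫ := by
      intro i; simp [hp', hq', Module.End.mul_apply]
    rw [Finset.sum_congr rfl fun i _ => hqp i, sum_inner_eq_trace_aux e he (q * p),
      trace_qp_zero p q hp hpqp]
  exact inner_self_eq_zero.mp (hzero Z)
end
end

section
/- Let J: M → ℝ^N be an isometric embedding, A_i(x) = (dJ(x))*e_i for an orthonormal basis {e_i} of ℝ^N, and T_1(B) = Σ_{i=1}^N div(A_i) L_{A_i}B. Then T_1(B) = -A(B, Trace(α)), where A is the shape operator and Trace(α) the mean curvature vector field (trace of the second fundamental form). -/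
noncomputable section

/-- For `A_i(x) = (dJ(x))^* e_i` and `T₁(B) = Σ_i div(A_i) L_{A_i}B`, one has
`T₁(B) = -𝒜(B, Trace α)`.  Here: `a i` are the chart components of the fields
`A_i` (so `dJ(y)(a i y) = Λ_y e_i`); `v` is an orthonormal tangent frame
(embedded images orthonormal); `div(A_i)(y) = ⟨Trace(α_y), e_i⟩`;
the Lie derivative in the chart is `L_{A_i}B = ∂B(A_i) - ∂A_i(B)`, embedded
via `dJ(x)`; and `Trace α` is the mean curvature vector field. -/
theorem T1_eq_neg_shape_trace_sff {n N : ℕ}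
    (d : IsoEmbedding (EuclideanSpace ℝ (Fin n)) (EuclideanSpace ℝ (Fin N)))
    (e : Fin N → EuclideanSpace ℝ (Fin N)) (he : Orthonormal ℝ e)
    (a : Fin N → EuclideanSpace ℝ (Fin n) → EuclideanSpace ℝ (Fin n))
    (ha_diff : ∀ i, Differentiable ℝ (a i))
    (ha : ∀ i y, fderiv ℝ d.J y (a i y) = d.P y (e i))
    (v : Fin n → EuclideanSpace ℝ (Fin n) → EuclideanSpace ℝ (Fin n))
    (hv_diff : ∀ j, Differentiable ℝ (v j))
    (hv : ∀ y, Orthonormal ℝ (fun j => fderiv ℝ d.J y (v j y)))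
    (b : EuclideanSpace ℝ (Fin n) → EuclideanSpace ℝ (Fin n))
    (hb : Differentiable ℝ b) (x : EuclideanSpace ℝ (Fin n)) :
    ∑ i, (inner ℝ (∑ j, d.sff x (v j x) (v j x)) (e i) : ℝ) •
        fderiv ℝ d.J x (fderiv ℝ b x (a i x) - fderiv ℝ (a i) x (b x))
      = - d.shape (fun y => ∑ j, d.sff y (v j y) (v j y)) x (b x) := by
  classical
  set Tr : EuclideanSpace ℝ (Fin n) → EuclideanSpace ℝ (Fin N) :=
    fun y => ∑ j, d.sff y (v j y) (v j y) with hTrdef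
  have hTrx : (∑ j, d.sff x (v j x) (v j x)) = Tr x := rfl
  rw [hTrx]
  -- basic differentiabilities
  have hJd : Differentiable ℝ d.J := d.smoothJ.differentiable (by simp)
  have hPd : Differentiable ℝ d.P := d.smoothP.differentiable (by simp)
  have hJ' : Differentiable ℝ (fderiv ℝ d.J) :=
    (d.smoothJ.fderiv_right (m := (⊤ : ℕ∞)) (by simp)).differentiable (by simp)
  have hP' : Differentiable ℝ (fderiv ℝ d.P) :=
    (d.smoothP.fderiv_right (m := (⊤ : ℕ∞)) (by simp)).differentiable (by simp)
  -- derivative of y ↦ P y ξ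
  have hPapp : ∀ (ξ : EuclideanSpace ℝ (Fin N)) (x₀ : EuclideanSpace ℝ (Fin n)),
      fderiv ℝ (fun y => d.P y ξ) x₀ = (fderiv ℝ d.P x₀).flip ξ := by
    intro ξ x₀
    have h := fderiv_clm_apply (𝕜 := ℝ) (c := d.P) (u := fun _ => ξ)
      (hPd x₀) (differentiableAt_const ξ)
    simpa using h
  -- P x₀ ∘ (P' x₀ u) kills tangent vectors
  have hnormal : ∀ (x₀ u : EuclideanSpace ℝ (Fin n)) (ξ : EuclideanSpace ℝ (Fin N)),
      d.P x₀ ξ = ξ → d.P x₀ ((fderiv ℝ d.P x₀ u) ξ) = 0 := by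
    intro x₀ u ξ hξ
    have hfun : (fun y => d.P y (d.P y ξ)) = fun y => d.P y ξ := by
      funext y
      have h := congrArg (fun L : EuclideanSpace ℝ (Fin N) →L[ℝ] EuclideanSpace ℝ (Fin N) =>
        L ξ) (d.idem y)
      simpa using h
    have h3 : fderiv ℝ (fun y => d.P y (d.P y ξ)) x₀ = (fderiv ℝ d.P x₀).flip ξ := by
      rw [hfun, hPapp]
    rw [fderiv_clm_apply (hPd x₀) ((hPd.clm_apply (differentiable_const ξ)) x₀),
      hPapp] at h3
    have h4 := congrArg (fun L : EuclideanSpace ℝ (Fin n) →L[ℝ] EuclideanSpace ℝ (Fin N) =>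
      L u) h3
    simp only [ContinuousLinearMap.add_apply, ContinuousLinearMap.comp_apply,
      ContinuousLinearMap.flip_apply] at h4
    rw [hξ] at h4
    have h5 : d.P x₀ ((fderiv ℝ d.P x₀ u) ξ) + (fderiv ℝ d.P x₀ u) ξ
        = 0 + (fderiv ℝ d.P x₀ u) ξ := by rw [zero_add]; exact h4
    exact add_right_cancel h5
  -- Tr is normal
  have hTrNormal : ∀ y, d.P y (Tr y) = 0 := by
    intro y
    rw [hTrdef]
    simp only [IsoEmbedding.sff, map_sum]
    refine Finset.sum_eq_zero fun j _ => ?_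
    exact hnormal y (v j y) _ (d.proj_fix y (v j y))
  -- Tr is differentiable
  have hTrDiff : Differentiable ℝ Tr := by
    rw [hTrdef]
    simp only [IsoEmbedding.sff]
    exact Differentiable.fun_sum fun j _ =>
      (hP'.clm_apply (hv_diff j)).clm_apply (hJ'.clm_apply (hv_diff j))
  -- differentiating P y (Tr y) = 0
  have hD2 : d.P x (fderiv ℝ Tr x (b x)) + (fderiv ℝ d.P x (b x)) (Tr x) = 0 := by
    have hfun : (fun y => d.P y (Tr y)) = fun _ => (0 : EuclideanSpace ℝ (Fin N)) :=
      funext hTrNormal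
    have h3 : fderiv ℝ (fun y => d.P y (Tr y)) x = 0 := by rw [hfun]; simp
    rw [fderiv_clm_apply (hPd x) (hTrDiff x)] at h3
    have h4 := congrArg (fun L : EuclideanSpace ℝ (Fin n) →L[ℝ] EuclideanSpace ℝ (Fin N) =>
      L (b x)) h3
    simpa using h4
  -- differentiating dJ y (a i y) = P y (e i)
  have hC : ∀ i, fderiv ℝ d.J x (fderiv ℝ (a i) x (b x))
      + (fderiv ℝ (fderiv ℝ d.J) x (b x)) (a i x)
      = (fderiv ℝ d.P x (b x)) (e i) := by
    intro i
    have hfun : (fun y => fderiv ℝ d.J y (a i y)) = fun y => d.P y (e i) :=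
      funext (ha i)
    have h3 : fderiv ℝ (fun y => fderiv ℝ d.J y (a i y)) x = (fderiv ℝ d.P x).flip (e i) := by
      rw [hfun, hPapp]
    rw [fderiv_clm_apply (hJ' x) (ha_diff i x)] at h3
    have h4 := congrArg (fun L : EuclideanSpace ℝ (Fin n) →L[ℝ] EuclideanSpace ℝ (Fin N) =>
      L (b x)) h3
    simpa using h4
  -- orthonormal basis expansion
  have hrepr : ∑ i, (inner ℝ (Tr x) (e i) : ℝ) • e i = Tr x := by
    rcases Nat.eq_zero_or_pos N with hN | hN
    · subst hN
      have : Subsingleton (EuclideanSpace ℝ (Fin 0)) := by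
        constructor; intro a b; ext i; exact absurd i.2 (Nat.not_lt_zero _)
      exact Subsingleton.elim _ _
    · have : Nonempty (Fin N) := ⟨⟨0, hN⟩⟩
      have hcard : Fintype.card (Fin N) = Module.finrank ℝ (EuclideanSpace ℝ (Fin N)) := by
        simp
      have hspan : ⊤ ≤ Submodule.span ℝ (Set.range e) :=
        (he.linearIndependent.span_eq_top_of_card_eq_finrank hcard).ge
      have h := (OrthonormalBasis.mk he hspan).sum_repr' (Tr x)
      simp only [OrthonormalBasis.coe_mk] at h
      calc ∑ i, (inner ℝ (Tr x) (e i) : ℝ) • e i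
          = ∑ i, (inner ℝ (e i) (Tr x) : ℝ) • e i := by
            simp_rw [real_inner_comm]
        _ = Tr x := h
  -- the tangent combination vanishes
  have hB : ∑ i, (inner ℝ (Tr x) (e i) : ℝ) • a i x = 0 := by
    apply d.immersion x
    rw [map_sum, map_zero]
    calc ∑ i, fderiv ℝ d.J x ((inner ℝ (Tr x) (e i) : ℝ) • a i x)
        = d.P x (∑ i, (inner ℝ (Tr x) (e i) : ℝ) • e i) := by
          simp [map_smul, ha, map_sum]
      _ = 0 := by rw [hrepr]; exact hTrNormal x
  -- main computation
  have hsplit : ∑ i, (inner ℝ (Tr x) (e i) : ℝ) •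
        fderiv ℝ d.J x (fderiv ℝ b x (a i x) - fderiv ℝ (a i) x (b x))
      = (∑ i, (inner ℝ (Tr x) (e i) : ℝ) • fderiv ℝ d.J x (fderiv ℝ b x (a i x)))
        - ∑ i, (inner ℝ (Tr x) (e i) : ℝ) • fderiv ℝ d.J x (fderiv ℝ (a i) x (b x)) := by
    rw [← Finset.sum_sub_distrib]
    refine Finset.sum_congr rfl fun i _ => ?_
    rw [map_sub, smul_sub]
  have h1 : ∑ i, (inner ℝ (Tr x) (e i) : ℝ) • fderiv ℝ d.J x (fderiv ℝ b x (a i x)) = 0 := by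
    have h : ∑ i, (inner ℝ (Tr x) (e i) : ℝ) • fderiv ℝ d.J x (fderiv ℝ b x (a i x))
        = fderiv ℝ d.J x (fderiv ℝ b x (∑ i, (inner ℝ (Tr x) (e i) : ℝ) • a i x)) := by
      rw [map_sum, map_sum]
      simp [map_smul]
    rw [h, hB]
    simp
  have h2 : ∑ i, (inner ℝ (Tr x) (e i) : ℝ) • fderiv ℝ d.J x (fderiv ℝ (a i) x (b x))
      = - d.P x (fderiv ℝ Tr x (b x)) := by
    have h : ∑ i, (inner ℝ (Tr x) (e i) : ℝ) • fderiv ℝ d.J x (fderiv ℝ (a i) x (b x))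
        = ∑ i, (inner ℝ (Tr x) (e i) : ℝ) • ((fderiv ℝ d.P x (b x)) (e i)
            - (fderiv ℝ (fderiv ℝ d.J) x (b x)) (a i x)) := by
      refine Finset.sum_congr rfl fun i _ => ?_
      rw [eq_sub_iff_add_eq.mpr (hC i)]
    rw [h]
    have h' : ∑ i, (inner ℝ (Tr x) (e i) : ℝ) • ((fderiv ℝ d.P x (b x)) (e i)
          - (fderiv ℝ (fderiv ℝ d.J) x (b x)) (a i x))
        = (fderiv ℝ d.P x (b x)) (∑ i, (inner ℝ (Tr x) (e i) : ℝ) • e i)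
          - (fderiv ℝ (fderiv ℝ d.J) x (b x)) (∑ i, (inner ℝ (Tr x) (e i) : ℝ) • a i x) := by
      rw [map_sum, map_sum, ← Finset.sum_sub_distrib]
      refine Finset.sum_congr rfl fun i _ => ?_
      rw [smul_sub, map_smul, map_smul]
    rw [h', hrepr, hB, map_zero, sub_zero]
    exact eq_neg_of_add_eq_zero_left (by rw [add_comm]; exact hD2)
  rw [hsplit, h1, h2, zero_sub, neg_neg]
  simp [IsoEmbedding.shape]
end
end
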